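/- Let $f:\Delta\to\Delta$ be a tower map over a probability space $(Y,\mu_Y)$ with integrable return time $r:Y\to\mathbb{Z}^+$ and invariant probability measure $\mu_\Delta=(\mu_Y\times\text{counting})/\bar r$. For $N\ge1$ let $\Delta_{\rm right}=\{(y,\ell): r(y)\ge N\}$ and for $k\ge 1$ let $E_k=\{x\in\Delta: f^jx\in\Delta_{\rm right}\text{ for at least one }j\in\{0,1,\dots,k\}\}$. Then $\mu_\Delta(E_k)\le \frac{1}{\bar r}\bigl(\sum_{n>N}\mu_Y(r\ge n) + (N+k)\,\mu_Y(r\ge N)\bigr)$. -/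

import Mathlib

open MeasureTheory
open scoped Classical

/-- The normalized tower measure `μ_Δ = (μ_Y × counting)/r̄`. -/
noncomputable def muDelta {Y : Type*} [MeasurableSpace Y] (μ : Measure Y) (r : Y → ℕ)
    (E : Set (Y × ℕ)) : ℝ :=
  (1 / ∫ y, (r y : ℝ) ∂μ) *
    ∫ y, (∑ ℓ ∈ Finset.range (r y), if (y, ℓ) ∈ E then (1 : ℝ) else 0) ∂μ

/-- The tower map `f(y,ℓ) = (y,ℓ+1)` for `ℓ+1 < r(y)`, and `f(y,r(y)-1) = (Fy,0)`. -/
noncomputable def towerMap {Y : Type*} (r : Y → ℕ) (F : Y → Y) (p : Y × ℕ) : Y × ℕ :=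
  if p.2 + 1 < r p.1 then (p.1, p.2 + 1) else (F p.1, 0)

/-! Summing over columns shows that `μ_Δ` is invariant under the tower map, so each preimage
`f^{-j}(Y × {0} ∩ Δ_right)` has measure `μ_Y(r ≥ N)/r̄`. A point of `E_k` either lies in
`Δ_right`, whose measure `(N μ_Y(r ≥ N) + ∑_{n>N} μ_Y(r ≥ n))/r̄` comes from summing tails, or
first enters `Δ_right` at some time `1 ≤ j ≤ k`, necessarily through the base; a union bound over
`j` gives the term `k μ_Y(r ≥ N)`. -/

open Finset
open scoped ENNReal

theorem Function.iterate_first_entry {α : Type*} {f : α → α} {P Q : α → Prop}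
    (hPQ : ∀ a, ¬ P a → P (f a) → Q (f a)) {x : α} {j : ℕ} (hj : P (f^[j] x)) :
    P x ∨ ∃ i ∈ Icc 1 j, Q (f^[i] x) := by
  induction j with
  | zero => exact Or.inl hj
  | succ j ih =>
    by_cases hPj : P (f^[j] x)
    · refine (ih hPj).imp_right fun ⟨i, hi, hQ⟩ => ⟨i, ?_, hQ⟩
      exact Icc_subset_Icc_right j.le_succ hi
    · rw [Function.iterate_succ_apply'] at hj
      exact Or.inr ⟨j + 1, mem_Icc.2 ⟨j.succ_pos, le_rfl⟩,
        by rw [Function.iterate_succ_apply']; exact hPQ _ hPj hj⟩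

section Tower

variable {Y : Type*}

section TowerMap

variable {r : Y → ℕ} {F : Y → Y} {p : Y × ℕ}

theorem towerMap_of_lt (h : p.2 + 1 < r p.1) : towerMap r F p = (p.1, p.2 + 1) := if_pos h

theorem towerMap_of_not_lt (h : ¬ p.2 + 1 < r p.1) : towerMap r F p = (F p.1, 0) := if_neg h

theorem towerMap_snd_eq_zero_of_fst_ne (h : (towerMap r F p).1 ≠ p.1) :
    (towerMap r F p).2 = 0 := by
  by_cases hp : p.2 + 1 < r p.1
  · exact absurd (by rw [towerMap_of_lt hp]) h
  · rw [towerMap_of_not_lt hp]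

/-- A point first entering `T × ℕ` at a time `j ≥ 1` does so through the base. -/
theorem setOf_exists_iterate_towerMap_mem_subset (T : Set Y) (k : ℕ) :
    {x | ∃ j ≤ k, ((towerMap r F)^[j] x).1 ∈ T}
      ⊆ {p | p.1 ∈ T} ∪ ⋃ j ∈ Icc 1 k, (towerMap r F)^[j] ⁻¹' {p | p.2 = 0 ∧ p.1 ∈ T} := by
  rintro x ⟨j, hjk, hj⟩
  rcases Function.iterate_first_entry (f := towerMap r F) (P := fun p => p.1 ∈ T)
    (Q := fun p => p.2 = 0 ∧ p.1 ∈ T)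
    (fun p hp hfp => ⟨towerMap_snd_eq_zero_of_fst_ne fun h => hp (h ▸ hfp), hfp⟩) hj
    with h | ⟨i, hi, hiB⟩
  · exact Or.inl h
  · exact Or.inr (Set.mem_biUnion (Icc_subset_Icc_right hjk hi) hiB)

theorem measurable_towerMap [MeasurableSpace Y] (hr : Measurable r) (hF : Measurable F) :
    Measurable (towerMap r F) := by
  refine measurable_from_prod_countable_left fun ℓ => ?_
  simp only [towerMap]
  exact Measurable.ite (measurableSet_lt measurable_const hr)
    (measurable_id.prodMk measurable_const) (hF.prodMk measurable_const)

end TowerMap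

/-- The number of points of `A` in the column above `y`; `muDelta μ r A` is its integral
divided by `r̄`. -/
noncomputable def columnCount (r : Y → ℕ) (A : Set (Y × ℕ)) (y : Y) : ℝ :=
  ∑ ℓ ∈ range (r y), if (y, ℓ) ∈ A then 1 else 0

section ColumnCount

variable {r : Y → ℕ} {A : Set (Y × ℕ)} {y : Y}

theorem columnCount_nonneg : 0 ≤ columnCount r A y :=
  sum_nonneg fun _ _ => by positivity

theorem columnCount_le : columnCount r A y ≤ r y := by
  calc columnCount r A y ≤ ∑ _ℓ ∈ range (r y), (1 : ℝ) :=
        sum_le_sum fun _ _ => by split <;> norm_num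
    _ = r y := by simp

theorem columnCount_le_add_sum {ι : Type*} {C : Set (Y × ℕ)} {B : ι → Set (Y × ℕ)}
    {s : Finset ι} (h : A ⊆ C ∪ ⋃ i ∈ s, B i) :
    columnCount r A y ≤ columnCount r C y + ∑ i ∈ s, columnCount r (B i) y := by
  unfold columnCount
  rw [sum_comm, ← sum_add_distrib]
  refine sum_le_sum fun ℓ _ => ?_
  by_cases hA : (y, ℓ) ∈ A
  swap
  · rw [if_neg hA]; positivity
  rw [if_pos hA]
  rcases h hA with hC | hB
  · rw [if_pos hC]
    exact le_add_of_nonneg_right (sum_nonneg fun _ _ => by positivity)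
  · obtain ⟨i, hi, hiB⟩ := Set.mem_iUnion₂.1 hB
    refine le_add_of_nonneg_of_le (by positivity) ?_
    exact (if_pos hiB).symm.le.trans
      (single_le_sum (f := fun i => if (y, ℓ) ∈ B i then (1 : ℝ) else 0)
        (fun _ _ => by positivity) hi)

theorem columnCount_base (hr : 1 ≤ r y) (T : Set Y) :
    columnCount r {p | p.2 = 0 ∧ p.1 ∈ T} y = T.indicator 1 y := by
  unfold columnCount
  rw [sum_eq_single_of_mem 0 (mem_range.2 hr) fun ℓ _ hℓ => by simp [hℓ]]
  by_cases hy : y ∈ T <;> simp [hy]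

theorem columnCount_fst_mem (T : Set Y) :
    columnCount r {p | p.1 ∈ T} y = T.indicator (fun y => (r y : ℝ)) y := by
  by_cases hy : y ∈ T <;> simp [columnCount, hy]

/-- Moving the column above `y` up one level drops `(y, 0)` and adds `(F y, 0)`. -/
theorem columnCount_preimage_towerMap_add {F : Y → Y} (hr : 1 ≤ r y) :
    columnCount r (towerMap r F ⁻¹' A) y + (if (y, 0) ∈ A then 1 else 0)
      = columnCount r A y + (if (F y, 0) ∈ A then 1 else 0) := by
  obtain ⟨m, hm⟩ : ∃ m, r y = m + 1 := ⟨r y - 1, by omega⟩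
  unfold columnCount
  rw [hm, sum_range_succ, sum_range_succ', Set.mem_preimage,
    towerMap_of_not_lt (by simp [hm])]
  have hup : ∀ ℓ ∈ range m, (if towerMap r F (y, ℓ) ∈ A then (1 : ℝ) else 0)
      = if (y, ℓ + 1) ∈ A then 1 else 0 := fun ℓ hℓ => by
    rw [towerMap_of_lt (by simp only; rw [hm]; simpa using hℓ)]
  simp only [Set.mem_preimage, sum_congr rfl hup]
  ring

variable [MeasurableSpace Y] {μ : Measure Y}

theorem measurable_columnCount (hr : Measurable r) (hA : MeasurableSet A) :
    Measurable (columnCount r A) := by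
  have hcol : Measurable fun q : Y × ℕ => ∑ ℓ ∈ range q.2, if (q.1, ℓ) ∈ A then (1 : ℝ) else 0 :=
    measurable_from_prod_countable_left fun n => Finset.measurable_sum (range n) fun ℓ _ =>
      Measurable.ite (measurable_prodMk_right hA) measurable_const measurable_const
  exact hcol.comp (measurable_id.prodMk hr)

theorem integrable_columnCount (hr : Measurable r) (hint : Integrable (fun y => (r y : ℝ)) μ)
    (hA : MeasurableSet A) : Integrable (columnCount r A) μ := by
  refine hint.mono' (measurable_columnCount hr hA).aestronglyMeasurable (ae_of_all _ fun y => ?_)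
  rw [Real.norm_eq_abs, abs_of_nonneg columnCount_nonneg]
  exact columnCount_le

theorem integral_columnCount_le_add_sum (hr : Measurable r)
    (hint : Integrable (fun y => (r y : ℝ)) μ) {ι : Type*} {C : Set (Y × ℕ)}
    {B : ι → Set (Y × ℕ)} {s : Finset ι} (hC : MeasurableSet C)
    (hB : ∀ i ∈ s, MeasurableSet (B i)) (h : A ⊆ C ∪ ⋃ i ∈ s, B i) :
    ∫ y, columnCount r A y ∂μ
      ≤ ∫ y, columnCount r C y ∂μ + ∑ i ∈ s, ∫ y, columnCount r (B i) y ∂μ := by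
  have hBint : ∀ i ∈ s, Integrable (columnCount r (B i)) μ :=
    fun i hi => integrable_columnCount hr hint (hB i hi)
  rw [← integral_finsetSum s hBint, ← integral_add (integrable_columnCount hr hint hC)
    (integrable_finsetSum s hBint)]
  exact integral_mono_of_nonneg (ae_of_all _ fun _ => columnCount_nonneg)
    ((integrable_columnCount hr hint hC).add (integrable_finsetSum s hBint))
    (ae_of_all _ fun _ => columnCount_le_add_sum h)

end ColumnCount

section Invariance

variable [MeasurableSpace Y] {μ : Measure Y} [IsFiniteMeasure μ] {r : Y → ℕ} {F : Y → Y}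

theorem integral_columnCount_preimage_towerMap (hr : Measurable r) (hr1 : ∀ y, 1 ≤ r y)
    (hint : Integrable (fun y => (r y : ℝ)) μ) (hF : MeasurePreserving F μ μ)
    {A : Set (Y × ℕ)} (hA : MeasurableSet A) :
    ∫ y, columnCount r (towerMap r F ⁻¹' A) y ∂μ = ∫ y, columnCount r A y ∂μ := by
  set q : Y → ℝ := fun y => if (y, 0) ∈ A then 1 else 0
  have hqm : Measurable q := Measurable.ite (measurable_prodMk_right hA) measurable_const
    measurable_const
  have hq : Integrable q μ := (integrable_const 1).mono' hqm.aestronglyMeasurable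
    (ae_of_all _ fun y => by simp only [q]; split <;> norm_num)
  have hqF : ∫ y, q (F y) ∂μ = ∫ y, q y ∂μ := by
    rw [← integral_map_of_stronglyMeasurable hF.measurable hqm.stronglyMeasurable, hF.map_eq]
  have hsum : ∫ y, (columnCount r (towerMap r F ⁻¹' A) y + q y) ∂μ
      = ∫ y, (columnCount r A y + q (F y)) ∂μ :=
    integral_congr_ae (ae_of_all _ fun y => columnCount_preimage_towerMap_add (hr1 y))
  have hpre := measurable_towerMap hr hF.measurable hA
  rw [integral_add (integrable_columnCount hr hint hpre) hq,
    integral_add (integrable_columnCount hr hint hA) (g := fun y => q (F y))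
      (hF.integrable_comp_of_integrable hq), hqF] at hsum
  exact add_right_cancel hsum

theorem integral_columnCount_preimage_iterate_towerMap (hr : Measurable r) (hr1 : ∀ y, 1 ≤ r y)
    (hint : Integrable (fun y => (r y : ℝ)) μ) (hF : MeasurePreserving F μ μ)
    {A : Set (Y × ℕ)} (hA : MeasurableSet A) (j : ℕ) :
    ∫ y, columnCount r ((towerMap r F)^[j] ⁻¹' A) y ∂μ = ∫ y, columnCount r A y ∂μ := by
  induction j with
  | zero => rfl
  | succ j ih =>
    rw [Function.iterate_succ, Set.preimage_comp, integral_columnCount_preimage_towerMap hr hr1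
      hint hF ((measurable_towerMap hr hF.measurable).iterate j hA), ih]

theorem integral_columnCount_preimage_iterate_base (hr : Measurable r) (hr1 : ∀ y, 1 ≤ r y)
    (hint : Integrable (fun y => (r y : ℝ)) μ) (hF : MeasurePreserving F μ μ)
    {T : Set Y} (hT : MeasurableSet T) (j : ℕ) :
    ∫ y, columnCount r ((towerMap r F)^[j] ⁻¹' {p | p.2 = 0 ∧ p.1 ∈ T}) y ∂μ = (μ T).toReal := by
  have hbase : MeasurableSet {p : Y × ℕ | p.2 = 0 ∧ p.1 ∈ T} :=
    (measurable_snd (measurableSet_singleton 0)).inter (measurable_fst hT)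
  rw [integral_columnCount_preimage_iterate_towerMap hr hr1 hint hF hbase,
    integral_congr_ae (ae_of_all _ fun y => columnCount_base (hr1 y) T),
    integral_indicator_one hT, measureReal_def]

end Invariance

section TailSum

variable [MeasurableSpace Y] {μ : Measure Y} {r : Y → ℕ}

theorem lintegral_indicator_natCast_eq_tsum (hr : Measurable r) (N : ℕ) :
    ∫⁻ y, {y | N ≤ r y}.indicator (fun y => (r y : ℝ≥0∞)) y ∂μ
      = N * μ {y | N ≤ r y} + ∑' n : ℕ, μ {y | N + 1 + n ≤ r y} := by
  have htail : ∀ y, ∑' n : ℕ, {y | N + 1 + n ≤ r y}.indicator (1 : Y → ℝ≥0∞) y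
      = (r y - N : ℕ) := fun y => by
    rw [tsum_eq_sum (s := range (r y - N)) fun n hn => by
      simp only [mem_range] at hn; simp [Set.indicator_apply]; omega]
    rw [sum_congr rfl fun n hn => by
      simp only [mem_range] at hn
      exact Set.indicator_of_mem (by simp only [Set.mem_ofPred_eq]; omega) _]
    simp
  have hpt : ∀ y, {y | N ≤ r y}.indicator (fun y => (r y : ℝ≥0∞)) y
      = N * {y | N ≤ r y}.indicator 1 y
        + ∑' n : ℕ, {y | N + 1 + n ≤ r y}.indicator (1 : Y → ℝ≥0∞) y := fun y => by
    rw [htail]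
    by_cases hy : N ≤ r y
    · simp only [Set.indicator_apply, Set.mem_ofPred_eq, hy, if_true, Pi.one_apply, mul_one]
      rw [← Nat.cast_add, Nat.add_sub_cancel' hy]
    · simp [hy, Nat.sub_eq_zero_of_le (Nat.le_of_not_le hy)]
  have hS : ∀ c : ℕ, MeasurableSet {y | c ≤ r y} := fun c => hr measurableSet_Ici
  simp_rw [hpt]
  rw [lintegral_add_left ((measurable_one.indicator (hS N)).const_mul _),
    lintegral_const_mul _ (measurable_one.indicator (hS N)), lintegral_indicator_one (hS N),
    lintegral_tsum fun n => (measurable_one.indicator (hS _)).aemeasurable]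
  simp_rw [lintegral_indicator_one (hS _)]

theorem integral_indicator_natCast_eq_tsum [IsFiniteMeasure μ] (hr : Measurable r)
    (hint : Integrable (fun y => (r y : ℝ)) μ) (N : ℕ) :
    ∫ y, {y | N ≤ r y}.indicator (fun y => (r y : ℝ)) y ∂μ
      = N * (μ {y | N ≤ r y}).toReal + ∑' n : ℕ, (μ {y | N + 1 + n ≤ r y}).toReal := by
  have hofReal : ∀ y, ENNReal.ofReal ({y | N ≤ r y}.indicator (fun y => (r y : ℝ)) y)
      = {y | N ≤ r y}.indicator (fun y => (r y : ℝ≥0∞)) y := fun y => by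
    by_cases hy : N ≤ r y <;> simp [hy]
  have hfin : N * μ {y | N ≤ r y} + ∑' n : ℕ, μ {y | N + 1 + n ≤ r y} ≠ ∞ := by
    rw [← lintegral_indicator_natCast_eq_tsum hr]
    refine ne_top_of_le_ne_top hint.lintegral_lt_top.ne (lintegral_mono fun y => ?_)
    rw [← hofReal]
    exact ENNReal.ofReal_le_ofReal (Set.indicator_le_self' (fun _ _ => by positivity) y)
  have hS : MeasurableSet {y | N ≤ r y} := hr measurableSet_Ici
  rw [integral_eq_lintegral_of_nonneg_ae (f := {y | N ≤ r y}.indicator fun y => (r y : ℝ))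
      (ae_of_all _ fun _ => Set.indicator_nonneg (fun _ _ => by positivity) _)
      (hint.indicator hS).aestronglyMeasurable,
    lintegral_congr hofReal, lintegral_indicator_natCast_eq_tsum hr,
    ENNReal.toReal_add (ENNReal.add_ne_top.1 hfin).1 (ENNReal.add_ne_top.1 hfin).2,
    ENNReal.toReal_mul, ENNReal.tsum_toReal_eq fun _ => measure_ne_top _ _]
  simp

end TailSum

end Tower

theorem stmt2_general {Y : Type*} [MeasurableSpace Y] (μ : Measure Y) [IsProbabilityMeasure μ]
    (r : Y → ℕ) (hr : Measurable r) (hr1 : ∀ y, 1 ≤ r y)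
    (hint : Integrable (fun y => (r y : ℝ)) μ)
    (F : Y → Y) (hF : MeasurePreserving F μ μ)
    (N k : ℕ) :
    muDelta μ r {x : Y × ℕ | (∃ j ≤ k, N ≤ r ((towerMap r F)^[j] x).1) ∧ x.2 < r x.1}
      ≤ (1 / ∫ y, (r y : ℝ) ∂μ) *
        ((∑' n : ℕ, (μ {y | N + 1 + n ≤ r y}).toReal)
          + ((N : ℝ) + k) * (μ {y | N ≤ r y}).toReal) := by
  set S : Set Y := {y | N ≤ r y}
  have hS : MeasurableSet S := hr measurableSet_Ici
  have hpre (j : ℕ) : MeasurableSet ((towerMap r F)^[j] ⁻¹' {p | p.2 = 0 ∧ p.1 ∈ S}) :=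
    (measurable_towerMap hr hF.measurable).iterate j
      ((measurable_snd (measurableSet_singleton 0)).inter (measurable_fst hS))
  calc _ = (1 / ∫ y, (r y : ℝ) ∂μ) * ∫ y, columnCount r _ y ∂μ := rfl
    _ ≤ (1 / ∫ y, (r y : ℝ) ∂μ) * (∫ y, columnCount r {p | p.1 ∈ S} y ∂μ + ∑ j ∈ Icc 1 k,
          ∫ y, columnCount r ((towerMap r F)^[j] ⁻¹' {p | p.2 = 0 ∧ p.1 ∈ S}) y ∂μ) := by
      refine mul_le_mul_of_nonneg_left ?_
        (one_div_nonneg.2 (integral_nonneg fun _ => by positivity))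
      exact integral_columnCount_le_add_sum hr hint (measurable_fst hS) (fun j _ => hpre j)
        fun x hx => setOf_exists_iterate_towerMap_mem_subset S k hx.1
    _ = _ := by
      rw [sum_congr rfl fun j _ => integral_columnCount_preimage_iterate_base hr hr1 hint hF hS j]
      simp_rw [columnCount_fst_mem]
      rw [integral_indicator_natCast_eq_tsum hr hint N, sum_const, Nat.card_Icc, nsmul_eq_mul]
      push_cast
      ring

/-- Bound for the measure of the set `E_k` of points visiting
`Δ_right = {(y,ℓ) : r(y) ≥ N}` within `k` steps of the tower map. -/
theorem stmt2 {Y : Type*} [MeasurableSpace Y] (μ : Measure Y) [IsProbabilityMeasure μ]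
    (r : Y → ℕ) (hr : Measurable r) (hr1 : ∀ y, 1 ≤ r y)
    (hint : Integrable (fun y => (r y : ℝ)) μ)
    (F : Y → Y) (hF : MeasurePreserving F μ μ)
    (N k : ℕ) (hN : 1 ≤ N) (hk : 1 ≤ k) :
    muDelta μ r {x : Y × ℕ | (∃ j ≤ k, N ≤ r ((towerMap r F)^[j] x).1) ∧ x.2 < r x.1}
      ≤ (1 / ∫ y, (r y : ℝ) ∂μ) *
        ((∑' n : ℕ, (μ {y | N + 1 + n ≤ r y}).toReal)
          + ((N : ℝ) + k) * (μ {y | N ≤ r y}).toReal) :=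
  stmt2_general μ r hr hr1 hint F hF N k
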